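/- Any ideal straight 3-simplex in hyperbolic 3-space has volume at most V₃, where V₃ is the volume of the regular ideal simplex; formulated via the Lobachevsky function: for dihedral angles α, β, γ ≥ 0 with α + β + γ = π, Λ(α) + Λ(β) + Λ(γ) ≤ 3Λ(π/3), where Λ(θ) = −∫₀^θ log|2 sin t| dt. -/

import Mathlib

/-!
Since `Λ' = -log |2 sin|` and `sin u ≤ sin (s - u)` for `0 ≤ u ≤ s/2 ≤ π/2`, the function
`x ↦ Λ x + Λ (s - x)` increases on `[0, s/2]` whenever `s ≤ π`: moving two angles with fixed sum
towards each other increases the volume. Given angles `a ≤ π/3 ≤ c`, moving `a` and `c` replaces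
`a` by `π/3`; moving the two remaining angles, whose sum is now `2π/3`, makes both equal to `π/3`.
-/

open Real

/-- The Lobachevsky function `Λ(θ) = -∫₀^θ log |2 sin t| dt`. -/
noncomputable def lobachevsky (θ : ℝ) : ℝ := -∫ t in (0:ℝ)..θ, Real.log |2 * Real.sin t|

open MeasureTheory intervalIntegral Set

theorem intervalIntegrable_log_abs_two_mul_sin (a b : ℝ) :
    IntervalIntegrable (fun t ↦ log |2 * sin t|) volume a b := by
  simpa using (analyticOnNhd_const.mul analyticOnNhd_sin :
    AnalyticOnNhd ℝ (fun t ↦ 2 * sin t) _).meromorphicOn.intervalIntegrable_log_norm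

theorem sin_le_sin_of_le_of_le_pi_sub {u v : ℝ} (hu : 0 ≤ u) (huv : u ≤ v) (hv : v ≤ π - u) :
    sin u ≤ sin v := by
  have h : 0 ≤ 2 * sin ((v - u) / 2) * cos ((v + u) / 2) :=
    mul_nonneg (mul_nonneg two_pos.le (sin_nonneg_of_nonneg_of_le_pi (by linarith) (by linarith)))
      (cos_nonneg_of_neg_pi_div_two_le_of_le (by linarith) (by linarith))
  linarith [sin_sub_sin v u]

theorem log_abs_two_mul_sin_le {u v : ℝ} (hu : 0 < u) (huv : u ≤ v) (hv : v ≤ π - u) :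
    log |2 * sin u| ≤ log |2 * sin v| := by
  have hsin_u : 0 < sin u := sin_pos_of_pos_of_lt_pi hu (by linarith)
  have hsin := sin_le_sin_of_le_of_le_pi_sub hu.le huv hv
  rw [abs_of_pos (by positivity), abs_of_pos (by linarith)]
  exact log_le_log (by positivity) (by linarith)

theorem lobachevsky_sub_lobachevsky (x y : ℝ) :
    lobachevsky y - lobachevsky x = -∫ t in x..y, log |2 * sin t| := by
  rw [lobachevsky, lobachevsky, ← integral_interval_sub_left
    (intervalIntegrable_log_abs_two_mul_sin 0 y) (intervalIntegrable_log_abs_two_mul_sin 0 x)]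
  ring

theorem monotoneOn_lobachevsky_add_lobachevsky_sub {s : ℝ} (hs : s ≤ π) :
    MonotoneOn (fun x ↦ lobachevsky x + lobachevsky (s - x)) (Icc 0 (s / 2)) := by
  intro x hx y hy hxy
  have hmono : ∫ u in x..y, log |2 * sin u| ≤ ∫ u in x..y, log |2 * sin (s - u)| :=
    integral_mono_on_of_le_Ioo hxy (intervalIntegrable_log_abs_two_mul_sin x y)
      (by simpa using (intervalIntegrable_log_abs_two_mul_sin (s - x) (s - y)).comp_sub_left s)
      fun u hu ↦ log_abs_two_mul_sin_le (hx.1.trans_lt hu.1) (by linarith [hu.2, hy.2])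
        (by linarith)
  have hsub := lobachevsky_sub_lobachevsky (s - y) (s - x)
  rw [← integral_comp_sub_left] at hsub
  linarith [lobachevsky_sub_lobachevsky x y]

theorem lobachevsky_add_le_of_mem_Icc {x y z : ℝ} (hx : 0 ≤ x) (hy : y ∈ Icc x z)
    (hxz : x + z ≤ π) :
    lobachevsky x + lobachevsky z ≤ lobachevsky y + lobachevsky (x + z - y) := by
  have hmono := monotoneOn_lobachevsky_add_lobachevsky_sub hxz
  have hz : x + z - x = z := by ring
  rcases le_total (2 * y) (x + z) with hmid | hmid
  · simpa only [hz] using hmono ⟨hx, by linarith [hy.1]⟩ ⟨by linarith [hy.1], by linarith⟩ hy.1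
  · have := hmono ⟨hx, by linarith [hy.2]⟩ ⟨by linarith [hy.2], by linarith⟩
      (by linarith [hy.2] : x ≤ x + z - y)
    simp only [hz, sub_sub_cancel] at this
    linarith

theorem lobachevsky_add_le_two_mul {x y : ℝ} (hx : 0 ≤ x) (hy : 0 ≤ y) (hxy : x + y ≤ π) :
    lobachevsky x + lobachevsky y ≤ 2 * lobachevsky ((x + y) / 2) := by
  wlog hle : x ≤ y generalizing x y
  · simpa only [add_comm x y, add_comm (lobachevsky x)] using
      this hy hx (by linarith) (by linarith)
  have := lobachevsky_add_le_of_mem_Icc (y := (x + y) / 2) hx ⟨by linarith, by linarith⟩ hxy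
  rwa [show x + y - (x + y) / 2 = (x + y) / 2 by ring, ← two_mul] at this

theorem lobachevsky_add_add_le_of_le_of_le {a b c : ℝ} (ha : 0 ≤ a) (hb : 0 ≤ b)
    (ha3 : a ≤ π / 3) (hc3 : π / 3 ≤ c) (h : a + b + c = π) :
    lobachevsky a + lobachevsky b + lobachevsky c ≤ 3 * lobachevsky (π / 3) := by
  have hac := lobachevsky_add_le_of_mem_Icc ha ⟨ha3, hc3⟩ (by linarith : a + c ≤ π)
  have hbd := lobachevsky_add_le_two_mul hb (by linarith : 0 ≤ a + c - π / 3) (by linarith)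
  rw [show (b + (a + c - π / 3)) / 2 = π / 3 by linarith] at hbd
  linarith

/-- The volume `Λ(α)+Λ(β)+Λ(γ)` of an ideal hyperbolic tetrahedron with dihedral angles
`α, β, γ ≥ 0`, `α+β+γ = π`, is at most `3Λ(π/3)`, the volume of the regular ideal simplex. -/
theorem ideal_simplex_volume_le (α β γ : ℝ) (hα : 0 ≤ α) (hβ : 0 ≤ β) (hγ : 0 ≤ γ)
    (hsum : α + β + γ = π) :
    lobachevsky α + lobachevsky β + lobachevsky γ ≤ 3 * lobachevsky (π / 3) := by
  rcases le_total α (π / 3) with hα3 | hα3 <;> rcases le_total β (π / 3) with hβ3 | hβ3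
  · exact lobachevsky_add_add_le_of_le_of_le hα hβ hα3 (by linarith) hsum
  · linarith [lobachevsky_add_add_le_of_le_of_le hα hγ hα3 hβ3 (by linarith)]
  · linarith [lobachevsky_add_add_le_of_le_of_le hβ hγ hβ3 hα3 (by linarith)]
  · linarith [lobachevsky_add_add_le_of_le_of_le hγ hβ (by linarith) hα3 (by linarith)]
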